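/- Let M, m, R, r, k be strictly positive real constants. Consider the ODE on ℝ³ given by θ̇ = (r/k)·p, φ̇ = (R/k)·p, ṗ = −rR(M sin θ + m sin φ) (two spinning wheels with point masses coupled by a belt). Let (θ₀, φ₀, 0) be an equilibrium, i.e. M sin θ₀ + m sin φ₀ = 0, and assume M r cos θ₀ + m R cos φ₀ > 0. Then (θ₀, φ₀, 0) is Lyapunov stable: for every ε > 0 there exists δ > 0 such that every differentiable curve γ : [0,∞) → ℝ³ solving the ODE with ‖γ(0) − (θ₀,φ₀,0)‖ < δ satisfies ‖γ(t) − (θ₀,φ₀,0)‖ < ε for all t ≥ 0. In particular, (0,0,0) is always Lyapunov stable, and (0,π,0) is Lyapunov stable whenever M/R > m/r. -/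

import Mathlib

/-!
Both the energy `h` and the Casimir `C` are conserved along solutions, hence so is
`V = h - M sin θ₀ · C + μ (C - C z₀)²` for every `μ`. The equilibrium condition makes `z₀` a
critical point of `V`, and `M r cos θ₀ + m R cos φ₀ > 0` says that the Hessian of the potential
is positive on the kernel of `dC`; by Finsler's lemma the Hessian of `V` is then positive
definite for `μ` large. So `V` grows quadratically away from `z₀`, and a conserved function with
a quadratic minimum traps every trajectory that starts close enough to the minimum.
-/

open Set Real

section ProdDeriv

variable {E F : Type*} [NormedAddCommGroup E] [NormedSpace ℝ E] [NormedAddCommGroup F]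
  [NormedSpace ℝ F] {f : ℝ → E × F} {v : E × F} {s : Set ℝ} {t : ℝ}

theorem HasDerivWithinAt.fst (h : HasDerivWithinAt f v s t) :
    HasDerivWithinAt (fun u => (f u).1) v.1 s t := by
  simpa using h.hasFDerivWithinAt.fst.hasDerivWithinAt

theorem HasDerivWithinAt.snd (h : HasDerivWithinAt f v s t) :
    HasDerivWithinAt (fun u => (f u).2) v.2 s t := by
  simpa using h.hasFDerivWithinAt.snd.hasDerivWithinAt

end ProdDeriv

theorem eq_of_hasDerivWithinAt_Ici_zero {f : ℝ → ℝ}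
    (hf : ∀ t ∈ Ici (0 : ℝ), HasDerivWithinAt f 0 (Ici 0) t) {t : ℝ} (ht : 0 ≤ t) :
    f t = f 0 :=
  constant_of_has_deriv_right_zero
    (fun u hu => (hf u hu.1).continuousWithinAt.mono Icc_subset_Ici_self)
    (fun u hu => (hf u hu.1).mono (Ici_subset_Ici.mpr hu.1)) t ⟨ht, le_rfl⟩

theorem lyapunovStable_of_quadratic_growth {E : Type*} [SeminormedAddCommGroup E] {V : E → ℝ}
    {z₀ : E} {β ρ : ℝ} (hβ : 0 < β) (hρ : 0 < ρ) (hV : ContinuousAt V z₀)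
    (hgrowth : ∀ z, ‖z - z₀‖ ≤ ρ → V z₀ + β * ‖z - z₀‖ ^ 2 ≤ V z) :
    ∀ ε > 0, ∃ δ > 0, ∀ γ : ℝ → E, ContinuousOn γ (Ici 0) → (∀ t ≥ 0, V (γ t) ≤ V (γ 0)) →
      ‖γ 0 - z₀‖ < δ → ∀ t ≥ 0, ‖γ t - z₀‖ < ε := by
  intro ε hε
  set η := min (ε / 2) ρ
  have hη : 0 < η := lt_min (half_pos hε) hρ
  obtain ⟨δ, hδ, hVδ⟩ := Metric.continuousAt_iff.mp hV (β * η ^ 2) (by positivity)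
  refine ⟨min δ η, lt_min hδ hη, fun γ hγ hVγ h0 t ht => ?_⟩
  by_contra! hεt
  obtain ⟨s, ⟨hs, -⟩, hsη⟩ : ∃ s ∈ Icc 0 t, ‖γ s - z₀‖ = η :=
    intermediate_value_Icc ht ((hγ.mono Icc_subset_Ici_self).sub continuousOn_const).norm
      ⟨(h0.trans_le (min_le_right _ _)).le,
        (min_le_left _ _).trans ((half_le_self hε.le).trans hεt)⟩
  have hVs := hgrowth (γ s) (hsη.le.trans (min_le_right _ _))
  rw [hsη] at hVs
  have hV0 : dist (V (γ 0)) (V z₀) < β * η ^ 2 :=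
    hVδ (by rw [dist_eq_norm]; exact h0.trans_le (min_le_left _ _))
  rw [Real.dist_eq] at hV0
  linarith [(abs_lt.mp hV0).2, hVγ s hs]

theorem norm_sq_le_sq_add_sq_add_sq (w : ℝ × ℝ × ℝ) :
    ‖w‖ ^ 2 ≤ w.1 ^ 2 + w.2.1 ^ 2 + w.2.2 ^ 2 := by
  have hS : 0 ≤ w.1 ^ 2 + w.2.1 ^ 2 + w.2.2 ^ 2 := by positivity
  have hw : ‖w‖ ≤ √(w.1 ^ 2 + w.2.1 ^ 2 + w.2.2 ^ 2) := by
    simp only [norm_prod_le_iff, Real.norm_eq_abs]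
    refine ⟨abs_le_sqrt ?_, abs_le_sqrt ?_, abs_le_sqrt ?_⟩ <;>
      linarith [sq_nonneg w.1, sq_nonneg w.2.1, sq_nonneg w.2.2]
  calc ‖w‖ ^ 2 ≤ √(w.1 ^ 2 + w.2.1 ^ 2 + w.2.2 ^ 2) ^ 2 := pow_le_pow_left₀ (norm_nonneg _) hw 2
    _ = _ := sq_sqrt hS

theorem abs_pow_three_le_mul_sq {x ρ : ℝ} (h : |x| ≤ ρ) : |x| ^ 3 ≤ ρ * x ^ 2 := by
  rw [pow_succ', ← sq_abs x]
  exact mul_le_mul_of_nonneg_right h (sq_nonneg _)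

theorem cos_sub_cos_sub_sin_mul_ge {a b : ℝ} (h : |b - a| ≤ 1) :
    cos a * ((b - a) ^ 2 / 2) - |b - a| ^ 3 ≤ cos a - cos b - sin a * (b - a) := by
  obtain ⟨x, rfl⟩ : ∃ x, b = a + x := ⟨b - a, by ring⟩
  rw [add_sub_cancel_left] at h ⊢
  have hcos : |cos a * (cos x - (1 - x ^ 2 / 2))| ≤ |x| ^ 4 * (5 / 96) := by
    rw [abs_mul]
    exact (mul_le_of_le_one_left (abs_nonneg _) (abs_cos_le_one a)).trans (cos_bound h)
  have hsin : |sin a * (x - sin x)| ≤ |x| ^ 3 / 6 := by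
    rw [abs_mul]
    exact (mul_le_of_le_one_left (abs_nonneg _) (abs_sin_le_one a)).trans (abs_sub_sin_le x)
  have hx : |x| ^ 4 ≤ |x| ^ 3 := pow_le_pow_of_le_one (abs_nonneg x) h (by norm_num)
  have hexp : cos a - cos (a + x) - sin a * x
      = cos a * (x ^ 2 / 2) - cos a * (cos x - (1 - x ^ 2 / 2)) - sin a * (x - sin x) := by
    rw [cos_add]; ring
  rw [hexp]
  linarith [(abs_le.mp hcos).2, (abs_le.mp hsin).2, pow_nonneg (abs_nonneg x) 3]

/-- Finsler's lemma in two variables. -/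
theorem exists_pos_mul_sq_add_sq_le_add_mul_sq {A B R r : ℝ} (hP : 0 < A * r ^ 2 + B * R ^ 2) :
    ∃ μ c : ℝ, 0 < c ∧ ∀ x y : ℝ,
      c * (x ^ 2 + y ^ 2) ≤ A * x ^ 2 + B * y ^ 2 + μ * (R * x - r * y) ^ 2 := by
  have hN : 0 < R ^ 2 + r ^ 2 := by
    by_contra! h
    have hR : R = 0 := by nlinarith [sq_nonneg R, sq_nonneg r]
    have hr : r = 0 := by nlinarith [sq_nonneg R, sq_nonneg r]
    simp [hR, hr] at hP
  set P := A * r ^ 2 + B * R ^ 2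
  set N := R ^ 2 + r ^ 2
  set E := r * R * (A - B)
  refine ⟨(2 * E ^ 2 / P + P / 2 - (A * R ^ 2 + B * r ^ 2)) / N ^ 2, P / (2 * N), by positivity,
    fun x y => ?_⟩
  -- in the coordinates `u = r x + R y`, `s = R x - r y` the form is `(P u + 2 E s)² / (2 P)`
  have hsq : A * x ^ 2 + B * y ^ 2
        + (2 * E ^ 2 / P + P / 2 - (A * R ^ 2 + B * r ^ 2)) / N ^ 2 * (R * x - r * y) ^ 2
        - P / (2 * N) * (x ^ 2 + y ^ 2)
      = (P * (r * x + R * y) + 2 * E * (R * x - r * y)) ^ 2 / (2 * P * N ^ 2) := by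
    field_simp
    ring
  have : 0 ≤ (P * (r * x + R * y) + 2 * E * (R * x - r * y)) ^ 2 / (2 * P * N ^ 2) := by
    positivity
  linarith

namespace BeltWheels

variable (M m R r k : ℝ)

noncomputable def vectorField (z : ℝ × ℝ × ℝ) : ℝ × ℝ × ℝ :=
  ((r / k) * z.2.2, (R / k) * z.2.2, -(r * R) * (M * sin z.1 + m * sin z.2.1))

noncomputable def energy (z : ℝ × ℝ × ℝ) : ℝ :=
  z.2.2 ^ 2 / (2 * k) - M * R * cos z.1 - m * r * cos z.2.1

def casimir (z : ℝ × ℝ × ℝ) : ℝ := R * z.1 - r * z.2.1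

/-- The penalty `μ (C - C z₀)²` is again conserved, and for large `μ` it makes `z₀` a
nondegenerate minimum. -/
noncomputable def energyCasimir (θ₀ φ₀ μ : ℝ) (z : ℝ × ℝ × ℝ) : ℝ :=
  energy M m R r k z - M * sin θ₀ * casimir R r z
    + μ * (casimir R r z - casimir R r (θ₀, φ₀, 0)) ^ 2

variable {M m R r k}

theorem continuous_energyCasimir (θ₀ φ₀ μ : ℝ) :
    Continuous (energyCasimir M m R r k θ₀ φ₀ μ) := by
  unfold energyCasimir energy casimir
  fun_prop

section Conservation

variable {γ : ℝ → ℝ × ℝ × ℝ} {s : Set ℝ} {t : ℝ}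

theorem hasDerivWithinAt_energy_comp
    (h : HasDerivWithinAt γ (vectorField M m R r k (γ t)) s t) (hk : k ≠ 0) :
    HasDerivWithinAt (fun u => energy M m R r k (γ u)) 0 s t := by
  have hθ := h.fst
  have hφ := h.snd.fst
  have hp := h.snd.snd
  refine ((((hp.pow 2).div_const (2 * k)).sub (hθ.cos.const_mul (M * R))).sub
    (hφ.cos.const_mul (m * r))).congr_deriv ?_
  simp only [vectorField]
  field_simp
  ring

theorem hasDerivWithinAt_casimir_comp
    (h : HasDerivWithinAt γ (vectorField M m R r k (γ t)) s t) :
    HasDerivWithinAt (fun u => casimir R r (γ u)) 0 s t := by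
  refine ((h.fst.const_mul R).sub (h.snd.fst.const_mul r)).congr_deriv ?_
  simp only [vectorField]
  ring

end Conservation

theorem energyCasimir_comp_eq (hk : k ≠ 0) (θ₀ φ₀ μ : ℝ) {γ : ℝ → ℝ × ℝ × ℝ}
    (hγ : ∀ t ∈ Ici (0 : ℝ), HasDerivWithinAt γ (vectorField M m R r k (γ t)) (Ici 0) t)
    {t : ℝ} (ht : 0 ≤ t) :
    energyCasimir M m R r k θ₀ φ₀ μ (γ t) = energyCasimir M m R r k θ₀ φ₀ μ (γ 0) := by
  simp only [energyCasimir,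
    eq_of_hasDerivWithinAt_Ici_zero (fun u hu => hasDerivWithinAt_energy_comp (hγ u hu) hk) ht,
    eq_of_hasDerivWithinAt_Ici_zero (fun u hu => hasDerivWithinAt_casimir_comp (hγ u hu)) ht]

theorem energyCasimir_eq_add {θ₀ φ₀ : ℝ} (heq : M * sin θ₀ + m * sin φ₀ = 0) (μ θ φ p : ℝ) :
    energyCasimir M m R r k θ₀ φ₀ μ (θ, φ, p)
      = energyCasimir M m R r k θ₀ φ₀ μ (θ₀, φ₀, 0) + p ^ 2 / (2 * k)
        + M * R * (cos θ₀ - cos θ - sin θ₀ * (θ - θ₀))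
        + m * r * (cos φ₀ - cos φ - sin φ₀ * (φ - φ₀))
        + μ * (R * (θ - θ₀) - r * (φ - φ₀)) ^ 2 := by
  simp only [energyCasimir, energy, casimir]
  linear_combination r * (φ - φ₀) * heq

theorem energyCasimir_quadratic_growth (hM : 0 < M) (hm : 0 < m) (hR : 0 < R) (hr : 0 < r)
    (hk : 0 < k) {θ₀ φ₀ μ c : ℝ} (heq : M * sin θ₀ + m * sin φ₀ = 0) (hc : 0 < c)
    (hquad : ∀ x y : ℝ, c * (x ^ 2 + y ^ 2) ≤
      M * R * cos θ₀ / 2 * x ^ 2 + m * r * cos φ₀ / 2 * y ^ 2 + μ * (R * x - r * y) ^ 2) :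
    ∃ β > 0, ∃ ρ > 0, ∀ z, ‖z - (θ₀, φ₀, 0)‖ ≤ ρ →
      energyCasimir M m R r k θ₀ φ₀ μ (θ₀, φ₀, 0) + β * ‖z - (θ₀, φ₀, 0)‖ ^ 2
        ≤ energyCasimir M m R r k θ₀ φ₀ μ z := by
  set ρ := min 1 (c / (2 * (M * R + m * r)))
  set β := min (1 / (2 * k)) (c / 2)
  refine ⟨β, by positivity, ρ, by positivity, fun ⟨θ, φ, p⟩ hz => ?_⟩
  rw [energyCasimir_eq_add heq μ θ φ p]
  set x := θ - θ₀
  set y := φ - φ₀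
  have hzx : |x| ≤ ρ := by simpa using (norm_fst_le _).trans hz
  have hzy : |y| ≤ ρ := by simpa using ((norm_fst_le _).trans (norm_snd_le _)).trans hz
  have hnorm : ‖(θ, φ, p) - (θ₀, φ₀, 0)‖ ^ 2 ≤ x ^ 2 + y ^ 2 + p ^ 2 := by
    have := norm_sq_le_sq_add_sq_add_sq ((θ, φ, p) - (θ₀, φ₀, 0))
    simp only [Prod.fst_sub, Prod.snd_sub, sub_zero] at this
    exact this
  have hρ1 : ρ ≤ 1 := min_le_left _ _
  -- the cubic Taylor remainders are absorbed by half of the quadratic form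
  have hρc : (M * R + m * r) * ρ ≤ c / 2 := by
    have := min_le_right 1 (c / (2 * (M * R + m * r)))
    rw [le_div_iff₀ (by positivity)] at this
    linarith
  have hMR : 0 ≤ M * R := by positivity
  have hmr : 0 ≤ m * r := by positivity
  have hθ := mul_le_mul_of_nonneg_left (cos_sub_cos_sub_sin_mul_ge (hzx.trans hρ1)) hMR
  have hφ := mul_le_mul_of_nonneg_left (cos_sub_cos_sub_sin_mul_ge (hzy.trans hρ1)) hmr
  have hpot : c / 2 * (x ^ 2 + y ^ 2) ≤ M * R * (cos θ₀ - cos θ - sin θ₀ * x)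
      + m * r * (cos φ₀ - cos φ - sin φ₀ * y) + μ * (R * x - r * y) ^ 2 := by
    nlinarith [hquad x y, mul_le_mul_of_nonneg_left (abs_pow_three_le_mul_sq hzx) hMR,
      mul_le_mul_of_nonneg_left (abs_pow_three_le_mul_sq hzy) hmr,
      mul_le_mul_of_nonneg_right hρc (by positivity : 0 ≤ x ^ 2 + y ^ 2),
      mul_nonneg (mul_nonneg hMR (sq_nonneg y)) (by positivity : 0 ≤ ρ),
      mul_nonneg (mul_nonneg hmr (sq_nonneg x)) (by positivity : 0 ≤ ρ)]
  have hβ : β * ‖(θ, φ, p) - (θ₀, φ₀, 0)‖ ^ 2 ≤ p ^ 2 / (2 * k) + c / 2 * (x ^ 2 + y ^ 2) :=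
    calc β * ‖(θ, φ, p) - (θ₀, φ₀, 0)‖ ^ 2 ≤ β * p ^ 2 + β * (x ^ 2 + y ^ 2) := by
          nlinarith [mul_le_mul_of_nonneg_left hnorm (by positivity : 0 ≤ β)]
      _ ≤ 1 / (2 * k) * p ^ 2 + c / 2 * (x ^ 2 + y ^ 2) := by
          gcongr
          exacts [min_le_left _ _, min_le_right _ _]
      _ = p ^ 2 / (2 * k) + c / 2 * (x ^ 2 + y ^ 2) := by ring
  linarith

end BeltWheels

open BeltWheels in
/-- Lyapunov stability of the equilibria `(θ₀, φ₀, 0)` (with `M sin θ₀ + m sin φ₀ = 0` and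
`M r cos θ₀ + m R cos φ₀ > 0`) of the ODE on `ℝ³`
`θ̇ = (r/k)p, φ̇ = (R/k)p, ṗ = −rR(M sin θ + m sin φ)`
(two spinning wheels with point masses coupled by a belt; coordinates `(θ, φ, p)`). -/
theorem stmt_11 (M m R r k : ℝ) (hM : 0 < M) (hm : 0 < m) (hR : 0 < R) (hr : 0 < r)
    (hk : 0 < k) (θ₀ φ₀ : ℝ)
    (heq : M * Real.sin θ₀ + m * Real.sin φ₀ = 0)
    (hpos : 0 < M * r * Real.cos θ₀ + m * R * Real.cos φ₀) :
    ∀ ε > 0, ∃ δ > 0, ∀ γ : ℝ → ℝ × ℝ × ℝ,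
      (∀ t ∈ Set.Ici (0 : ℝ), HasDerivWithinAt γ
        ((r / k) * (γ t).2.2, (R / k) * (γ t).2.2,
          -(r * R) * (M * Real.sin (γ t).1 + m * Real.sin (γ t).2.1)) (Set.Ici 0) t) →
      ‖γ 0 - (θ₀, φ₀, (0 : ℝ))‖ < δ → ∀ t ≥ (0 : ℝ), ‖γ t - (θ₀, φ₀, (0 : ℝ))‖ < ε := by
  obtain ⟨μ, c, hc, hquad⟩ := exists_pos_mul_sq_add_sq_le_add_mul_sq
    (A := M * R * cos θ₀ / 2) (B := m * r * cos φ₀ / 2) (R := R) (r := r)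
    (by nlinarith [mul_pos hR hr])
  obtain ⟨β, hβ, ρ, hρ, hgrowth⟩ := energyCasimir_quadratic_growth hM hm hR hr hk heq hc hquad
  intro ε hε
  obtain ⟨δ, hδ, hstable⟩ := lyapunovStable_of_quadratic_growth hβ hρ
    (continuous_energyCasimir θ₀ φ₀ μ).continuousAt hgrowth ε hε
  exact ⟨δ, hδ, fun γ hγ => hstable γ (fun t ht => (hγ t ht).continuousWithinAt)
    (fun t ht => (energyCasimir_comp_eq hk.ne' θ₀ φ₀ μ hγ ht).le)⟩
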